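/- lim_{k→∞} k·η_k² = 1/8. -/

import Mathlib

/-!
For `0 ≤ z ≤ 1/√(8+8k)` the perturbation `4 C_k z^{2k+1} h_k(z)` of `p_k` is
nonnegative, since `C_k z^{2k-2} ≤ ((2k-2) z²)^{k-1} ≤ 1` makes `h_k(z) ≥ 1 - z - z³ > 0`.
So `p_k(η_k) ≤ 0`, which puts `η_k` beyond the positive root `ρ_k = 1/(1+√(8+8k))` of `p_k`.
Both `k ρ_k²` and `k (1/√(8+8k))²` tend to `1/8`, and `k η_k²` is squeezed between them.
-/

open Filter Set
open Topology

/-- `C_k = (2k-2)!/(k-1)!` as a real number. -/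
noncomputable def Cc (k : ℕ) : ℝ :=
  ((2 * k - 2).factorial : ℝ) / ((k - 1).factorial : ℝ)

/-- `p_k(z) = 1 − 2z − (7+8k)z²`. -/
noncomputable def Pp (k : ℕ) (z : ℝ) : ℝ := 1 - 2 * z - (7 + 8 * k) * z ^ 2

/-- `h_k(z) = 1 − z − C_k·z^{2k+1}`. -/
noncomputable def Hh (k : ℕ) (z : ℝ) : ℝ := 1 - z - Cc k * z ^ (2 * k + 1)

/-- `Δ_k(z) = p_k(z) + 4·C_k·z^{2k+1}·h_k(z)`. -/
noncomputable def Dd (k : ℕ) (z : ℝ) : ℝ :=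
  Pp k z + 4 * Cc k * z ^ (2 * k + 1) * Hh k z

/-- `g_k(z) = 2 − C_k·z^{2k−1}·(h_k(z) − C_k·z^{2k−1})`. -/
noncomputable def Gg (k : ℕ) (z : ℝ) : ℝ :=
  2 - Cc k * z ^ (2 * k - 1) * (Hh k z - Cc k * z ^ (2 * k - 1))

/-- `ρ_k = 1/(1+√(8+8k))`, the positive root of `p_k`. -/
noncomputable def rho (k : ℕ) : ℝ := 1 / (1 + Real.sqrt (8 + 8 * k))

/-- `ψ_k(x) = −x·Δ_k′(x)`. -/
noncomputable def psi (k : ℕ) (x : ℝ) : ℝ := -x * deriv (Dd k) x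

/-- `η` is a root of `Δ_k` in the interval `(0, 1/√(8+8k))`, and is the unique such root. -/
def IsEta (k : ℕ) (η : ℝ) : Prop :=
  η ∈ Set.Ioo (0 : ℝ) (1 / Real.sqrt (8 + 8 * k)) ∧ Dd k η = 0 ∧
    ∀ x ∈ Set.Ioo (0 : ℝ) (1 / Real.sqrt (8 + 8 * k)), Dd k x = 0 → x = η

lemma Cc_eq_descFactorial (k : ℕ) : Cc k = ((2 * k - 2).descFactorial (k - 1) : ℝ) := by
  have h := Nat.factorial_mul_descFactorial (n := 2 * k - 2) (k := k - 1) (by omega)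
  rw [show 2 * k - 2 - (k - 1) = k - 1 by omega] at h
  rw [Cc, div_eq_iff (by positivity), ← h]
  push_cast
  ring

lemma Cc_nonneg (k : ℕ) : 0 ≤ Cc k := by
  unfold Cc
  positivity

lemma Cc_mul_pow_le_one (k : ℕ) {z : ℝ} (hz : 0 ≤ z)
    (h : ((2 * k - 2 : ℕ) : ℝ) * z ^ 2 ≤ 1) : Cc k * z ^ (2 * k - 2) ≤ 1 := by
  have hC : Cc k ≤ ((2 * k - 2 : ℕ) : ℝ) ^ (k - 1) := by
    rw [Cc_eq_descFactorial]
    exact_mod_cast Nat.descFactorial_le_pow _ _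
  calc Cc k * z ^ (2 * k - 2)
      ≤ ((2 * k - 2 : ℕ) : ℝ) ^ (k - 1) * z ^ (2 * k - 2) := by gcongr
    _ = (((2 * k - 2 : ℕ) : ℝ) * z ^ 2) ^ (k - 1) := by
        rw [mul_pow, ← pow_mul, show 2 * (k - 1) = 2 * k - 2 by omega]
    _ ≤ 1 := pow_le_one₀ (by positivity) h

lemma Hh_nonneg {k : ℕ} (hk : 1 ≤ k) {z : ℝ} (hz : 0 ≤ z) (h : (8 + 8 * k) * z ^ 2 ≤ 1) :
    0 ≤ Hh k z := by
  have hK : ((2 * k - 2 : ℕ) : ℝ) ≤ 8 + 8 * k := by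
    rw [Nat.cast_sub (by omega)]
    push_cast
    linarith
  have hCz := Cc_mul_pow_le_one k hz (by nlinarith)
  have hz2 : z ^ 2 ≤ 1 / 8 := by nlinarith
  have hz_half : z ≤ 1 / 2 := by nlinarith
  calc (0 : ℝ) ≤ 1 - z - z * z ^ 2 := by nlinarith
    _ ≤ 1 - z - Cc k * z ^ (2 * k - 2) * z ^ 3 := by
        have : Cc k * z ^ (2 * k - 2) * z ^ 3 ≤ 1 * z ^ 3 := by gcongr
        linarith
    _ = Hh k z := by
        rw [Hh, mul_assoc, ← pow_add, show 2 * k - 2 + 3 = 2 * k + 1 by omega]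

lemma Pp_nonpos_of_Dd_eq_zero {k : ℕ} (hk : 1 ≤ k) {z : ℝ} (hz : 0 ≤ z)
    (h : (8 + 8 * k) * z ^ 2 ≤ 1) (hD : Dd k z = 0) : Pp k z ≤ 0 := by
  have := mul_nonneg (by have := Cc_nonneg k; positivity : 0 ≤ 4 * Cc k * z ^ (2 * k + 1))
    (Hh_nonneg hk hz h)
  rw [Dd] at hD
  linarith

lemma Pp_eq_mul (k : ℕ) (z : ℝ) :
    Pp k z = (1 - (1 + √(8 + 8 * k)) * z) * (1 + (√(8 + 8 * k) - 1) * z) := by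
  have hs := Real.sq_sqrt (by positivity : (0 : ℝ) ≤ 8 + 8 * k)
  rw [Pp]
  linear_combination z ^ 2 * hs

lemma rho_le_of_Pp_nonpos {k : ℕ} {z : ℝ} (hz : 0 ≤ z) (hP : Pp k z ≤ 0) : rho k ≤ z := by
  have hs : 1 ≤ √(8 + 8 * k) := Real.one_le_sqrt.mpr (by linarith [k.cast_nonneg (α := ℝ)])
  have hpos : 0 < 1 + (√(8 + 8 * k) - 1) * z := by nlinarith
  rw [Pp_eq_mul] at hP
  have : 1 ≤ (1 + √(8 + 8 * k)) * z := by nlinarith [nonpos_of_mul_nonpos_left hP hpos]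
  rw [rho, div_le_iff₀ (by positivity)]
  linarith

lemma mul_sq_le_one_of_le_one_div_sqrt {a z : ℝ} (ha : 0 ≤ a) (hz : 0 ≤ z)
    (h : z ≤ 1 / √a) : a * z ^ 2 ≤ 1 := by
  calc a * z ^ 2 ≤ a * (1 / √a) ^ 2 := by gcongr
    _ = a * a⁻¹ := by rw [div_pow, Real.sq_sqrt ha, one_pow, one_div]
    _ ≤ 1 := mul_inv_le_one

lemma tendsto_one_div_sqrt : Tendsto (fun k : ℕ => 1 / √(8 + 8 * k)) atTop (𝓝 0) := by
  simp only [one_div]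
  refine tendsto_inv_atTop_zero.comp (Real.tendsto_sqrt_atTop.comp ?_)
  exact tendsto_atTop_add_const_left _ _
    (tendsto_natCast_atTop_atTop.const_mul_atTop (by norm_num))

lemma tendsto_mul_one_div_sqrt_sq :
    Tendsto (fun k : ℕ => (k : ℝ) * (1 / √(8 + 8 * k)) ^ 2) atTop (𝓝 (1 / 8)) := by
  have h : Tendsto (fun k : ℕ => (1 - 8 * (1 / √(8 + 8 * k)) ^ 2) / 8) atTop
      (𝓝 ((1 - 8 * 0 ^ 2) / 8)) :=
    ((tendsto_one_div_sqrt.pow 2).const_mul 8).const_sub 1 |>.div_const 8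
  rw [show ((1 : ℝ) - 8 * 0 ^ 2) / 8 = 1 / 8 by norm_num] at h
  refine h.congr fun k => ?_
  rw [div_pow, one_pow, Real.sq_sqrt (by positivity)]
  field_simp
  ring

lemma tendsto_mul_rho_sq : Tendsto (fun k : ℕ => (k : ℝ) * rho k ^ 2) atTop (𝓝 (1 / 8)) := by
  have h : Tendsto
      (fun k : ℕ => (k : ℝ) * (1 / √(8 + 8 * k)) ^ 2 * ((1 + 1 / √(8 + 8 * k))⁻¹) ^ 2)
      atTop (𝓝 (1 / 8 * ((1 + 0)⁻¹) ^ 2)) :=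
    tendsto_mul_one_div_sqrt_sq.mul
      (((tendsto_one_div_sqrt.const_add 1).inv₀ (by norm_num)).pow 2)
  rw [show (1 / 8 : ℝ) * ((1 + 0)⁻¹) ^ 2 = 1 / 8 by norm_num] at h
  refine h.congr fun k => ?_
  have hs0 : √(8 + 8 * k) ≠ 0 := by positivity
  rw [rho]
  field_simp
  ring

/-- `lim_{k→∞} k·η_k² = 1/8`, where `η_k` is the unique root of `Δ_k` in
the real interval `(0, 1/√(8+8k))`. -/
theorem statement8 (η : ℕ → ℝ) (hη : ∀ k, 2 ≤ k → IsEta k (η k)) :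
    Tendsto (fun k : ℕ => (k : ℝ) * η k ^ 2) atTop (nhds (1 / 8)) := by
  have bounds : ∀ k, 2 ≤ k → rho k ≤ η k ∧ η k ≤ 1 / √(8 + 8 * k) := by
    intro k hk
    obtain ⟨⟨hη_pos, hη_lt⟩, hη_root, -⟩ := hη k hk
    have hη_sq : (8 + 8 * k) * η k ^ 2 ≤ 1 :=
      mul_sq_le_one_of_le_one_div_sqrt (by positivity) hη_pos.le hη_lt.le
    exact ⟨rho_le_of_Pp_nonpos hη_pos.le
      (Pp_nonpos_of_Dd_eq_zero (by omega) hη_pos.le hη_sq hη_root), hη_lt.le⟩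
  have hrho (k : ℕ) : 0 ≤ rho k := by unfold rho; positivity
  refine tendsto_of_tendsto_of_tendsto_of_le_of_le' tendsto_mul_rho_sq
    tendsto_mul_one_div_sqrt_sq ?_ ?_ <;>
    filter_upwards [eventually_ge_atTop 2] with k hk
  · gcongr
    exacts [hrho k, (bounds k hk).1]
  · gcongr
    exacts [(hrho k).trans (bounds k hk).1, (bounds k hk).2]
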